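/- Let M > 0, 0 ≤ a ≤ M, m ∈ ℤ, and set Δ(r) := r² − 2Mr + a², r₊ := M + √(M² − a²). For all u ∈ C²((r₊,∞),ℂ) with compact support in (r₊,∞) and all v ∈ C²((0,π),ℂ) with compact support in (0,π), one has [ ∫_{r₊}^∞ (Δ|u′|² − (m²a²/Δ)|u|²) dr ] · [ ∫_0^π sinθ |v|² dθ ] + [ ∫_{r₊}^∞ |u|² dr ] · [ ∫_0^π sinθ (|v′|² + (m²/sin²θ)|v|²) dθ ] ≤ [ ∫_{r₊}^∞ ( Δ|u′|² + ( (m²a²/r₊⁴ + 1/r₊²)(r⁴/Δ) − m²a²/Δ ) |u|² ) dr ] · [ ∫_0^π sinθ ( |v′|² + (m²/sin²θ + 1)|v|² ) dθ ]. -/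
import Mathlib


open MeasureTheory

/-- Kerr horizon function `Δ(r) = r² − 2Mr + a²`. -/
noncomputable def kerrDelta (M a r : ℝ) : ℝ := r ^ 2 - 2 * M * r + a ^ 2

/-- Outer horizon radius `r₊ = M + √(M² − a²)`. -/
noncomputable def rPlus (M a : ℝ) : ℝ := M + Real.sqrt (M ^ 2 - a ^ 2)

lemma rPlus_pos {M a : ℝ} (hM : 0 < M) : 0 < rPlus M a := by
  have := Real.sqrt_nonneg (M ^ 2 - a ^ 2); unfold rPlus; linarith

lemma M_le_rPlus {M a : ℝ} : M ≤ rPlus M a := by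
  have := Real.sqrt_nonneg (M ^ 2 - a ^ 2); unfold rPlus; linarith

lemma kerrDelta_pos {M a : ℝ} (hM : 0 < M) (ha : 0 ≤ a) (haM : a ≤ M)
    {r : ℝ} (hr : rPlus M a < r) : 0 < kerrDelta M a r := by
  have hsq : Real.sqrt (M ^ 2 - a ^ 2) ^ 2 = M ^ 2 - a ^ 2 :=
    Real.sq_sqrt (by nlinarith)
  have hs0 := Real.sqrt_nonneg (M ^ 2 - a ^ 2)
  unfold rPlus at hr
  unfold kerrDelta
  nlinarith [mul_pos
    (show (0:ℝ) < r - (M + Real.sqrt (M ^ 2 - a ^ 2)) by linarith)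
    (show (0:ℝ) < r - M + Real.sqrt (M ^ 2 - a ^ 2) by linarith)]

lemma aux_cont {U : Set ℝ} (hU : IsOpen U) {g h : ℝ → ℝ}
    (hg : ContinuousOn g U) (hh : Continuous h) (hsupp : tsupport h ⊆ U) :
    Continuous fun x => g x * h x := by
  rw [continuous_iff_continuousAt]
  intro x
  by_cases hx : x ∈ tsupport h
  · exact (hg.continuousAt (hU.mem_nhds (hsupp hx))).mul hh.continuousAt
  · have hev : ∀ᶠ y in nhds x, (0:ℝ) = g y * h y := by
      filter_upwards [(isClosed_tsupport h).isOpen_compl.mem_nhds hx] with y hy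
      rw [image_eq_zero_of_notMem_tsupport hy, mul_zero]
    exact continuousAt_const.congr hev

lemma aux_integrable {U : Set ℝ} (hU : IsOpen U) {g h : ℝ → ℝ}
    (hg : ContinuousOn g U) (hh : Continuous h) (hhc : HasCompactSupport h)
    (hsupp : tsupport h ⊆ U) : IntegrableOn (fun x => g x * h x) U := by
  have hcont := aux_cont hU hg hh hsupp
  have hcs : HasCompactSupport fun x => g x * h x := hhc.mul_left
  exact (hcont.integrable_of_hasCompactSupport hcs).integrableOn

lemma tsupport_norm_sq_subset {u : ℝ → ℂ} :
    tsupport (fun r => ‖u r‖ ^ 2) ⊆ tsupport u := by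
  apply closure_mono
  intro x hx
  simp only [Function.mem_support] at hx ⊢
  intro h0; apply hx; simp [h0]

set_option maxHeartbeats 1000000 in
theorem stmt_6 (M a : ℝ) (m : ℤ) (hM : 0 < M) (ha : 0 ≤ a) (haM : a ≤ M)
    (u v : ℝ → ℂ)
    (hu : ContDiff ℝ 2 u) (huc : HasCompactSupport u)
    (husupp : tsupport u ⊆ Set.Ioi (rPlus M a))
    (hv : ContDiff ℝ 2 v) (hvc : HasCompactSupport v)
    (hvsupp : tsupport v ⊆ Set.Ioo 0 Real.pi) :
    (∫ r in Set.Ioi (rPlus M a),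
          (kerrDelta M a r * ‖deriv u r‖ ^ 2 -
            (m : ℝ) ^ 2 * a ^ 2 / kerrDelta M a r * ‖u r‖ ^ 2)) *
        (∫ θ in Set.Ioo 0 Real.pi, Real.sin θ * ‖v θ‖ ^ 2) +
      (∫ r in Set.Ioi (rPlus M a), ‖u r‖ ^ 2) *
        (∫ θ in Set.Ioo 0 Real.pi,
          Real.sin θ * (‖deriv v θ‖ ^ 2 + (m : ℝ) ^ 2 / Real.sin θ ^ 2 * ‖v θ‖ ^ 2)) ≤
    (∫ r in Set.Ioi (rPlus M a),
        (kerrDelta M a r * ‖deriv u r‖ ^ 2 +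
          (((m : ℝ) ^ 2 * a ^ 2 / rPlus M a ^ 4 + 1 / rPlus M a ^ 2) *
              (r ^ 4 / kerrDelta M a r) -
            (m : ℝ) ^ 2 * a ^ 2 / kerrDelta M a r) * ‖u r‖ ^ 2)) *
      (∫ θ in Set.Ioo 0 Real.pi,
        Real.sin θ *
          (‖deriv v θ‖ ^ 2 + ((m : ℝ) ^ 2 / Real.sin θ ^ 2 + 1) * ‖v θ‖ ^ 2)) := by
  have hrp : 0 < rPlus M a := rPlus_pos hM
  have hΔpos : ∀ r ∈ Set.Ioi (rPlus M a), 0 < kerrDelta M a r :=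
    fun r hr => kerrDelta_pos hM ha haM hr
  have hΔcont : Continuous (kerrDelta M a) := by
    unfold kerrDelta; continuity
  -- building blocks for u
  have hucont : Continuous u := hu.continuous
  have hu'cont : Continuous (deriv u) := hu.continuous_deriv (by norm_num)
  have hu2cont : Continuous fun r => ‖u r‖ ^ 2 := (hucont.norm).pow 2
  have hu'2cont : Continuous fun r => ‖deriv u r‖ ^ 2 := (hu'cont.norm).pow 2
  have hu2c : HasCompactSupport fun r => ‖u r‖ ^ 2 :=
    huc.comp_left (g := fun z : ℂ => ‖z‖ ^ 2) (by simp)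
  have hu'2c : HasCompactSupport fun r => ‖deriv u r‖ ^ 2 :=
    huc.deriv.comp_left (g := fun z : ℂ => ‖z‖ ^ 2) (by simp)
  have hu'supp : tsupport (deriv u) ⊆ Set.Ioi (rPlus M a) :=
    (closure_minimal support_deriv_subset (isClosed_tsupport u)).trans husupp
  have hu2supp : tsupport (fun r => ‖u r‖ ^ 2) ⊆ Set.Ioi (rPlus M a) :=
    tsupport_norm_sq_subset.trans husupp
  have hu'2supp : tsupport (fun r => ‖deriv u r‖ ^ 2) ⊆ Set.Ioi (rPlus M a) :=
    tsupport_norm_sq_subset.trans hu'supp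
  -- building blocks for v
  have hvcont : Continuous v := hv.continuous
  have hv'cont : Continuous (deriv v) := hv.continuous_deriv (by norm_num)
  have hv2cont : Continuous fun θ => ‖v θ‖ ^ 2 := (hvcont.norm).pow 2
  have hv'2cont : Continuous fun θ => ‖deriv v θ‖ ^ 2 := (hv'cont.norm).pow 2
  have hv2c : HasCompactSupport fun θ => ‖v θ‖ ^ 2 :=
    hvc.comp_left (g := fun z : ℂ => ‖z‖ ^ 2) (by simp)
  have hv'2c : HasCompactSupport fun θ => ‖deriv v θ‖ ^ 2 :=
    hvc.deriv.comp_left (g := fun z : ℂ => ‖z‖ ^ 2) (by simp)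
  have hv'supp : tsupport (deriv v) ⊆ Set.Ioo 0 Real.pi :=
    (closure_minimal support_deriv_subset (isClosed_tsupport v)).trans hvsupp
  have hv2supp : tsupport (fun θ => ‖v θ‖ ^ 2) ⊆ Set.Ioo 0 Real.pi :=
    tsupport_norm_sq_subset.trans hvsupp
  have hv'2supp : tsupport (fun θ => ‖deriv v θ‖ ^ 2) ⊆ Set.Ioo 0 Real.pi :=
    tsupport_norm_sq_subset.trans hv'supp
  have hΔne : ∀ r ∈ Set.Ioi (rPlus M a), kerrDelta M a r ≠ 0 :=
    fun r hr => (hΔpos r hr).ne'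
  -- radial integrability
  have IA1 : IntegrableOn (fun r => kerrDelta M a r * ‖deriv u r‖ ^ 2)
      (Set.Ioi (rPlus M a)) :=
    aux_integrable isOpen_Ioi hΔcont.continuousOn hu'2cont hu'2c hu'2supp
  have IA2 : IntegrableOn (fun r => (m : ℝ) ^ 2 * a ^ 2 / kerrDelta M a r * ‖u r‖ ^ 2)
      (Set.Ioi (rPlus M a)) :=
    aux_integrable isOpen_Ioi
      (ContinuousOn.div continuousOn_const hΔcont.continuousOn hΔne)
      hu2cont hu2c hu2supp
  have IG : IntegrableOn
      (fun r => ((m : ℝ) ^ 2 * a ^ 2 / rPlus M a ^ 4 + 1 / rPlus M a ^ 2) *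
        (r ^ 4 / kerrDelta M a r) * ‖u r‖ ^ 2) (Set.Ioi (rPlus M a)) :=
    aux_integrable isOpen_Ioi
      (ContinuousOn.mul continuousOn_const
        (ContinuousOn.div (by fun_prop) hΔcont.continuousOn hΔne))
      hu2cont hu2c hu2supp
  have IC : IntegrableOn (fun r => ‖u r‖ ^ 2) (Set.Ioi (rPlus M a)) :=
    (hu2cont.integrable_of_hasCompactSupport hu2c).integrableOn
  -- angular integrability
  have hsinne : ∀ θ ∈ Set.Ioo 0 Real.pi, Real.sin θ ≠ 0 :=
    fun θ hθ => (Real.sin_pos_of_pos_of_lt_pi hθ.1 hθ.2).ne'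
  have ID1 : IntegrableOn (fun θ => Real.sin θ * ‖deriv v θ‖ ^ 2)
      (Set.Ioo 0 Real.pi) :=
    aux_integrable isOpen_Ioo Real.continuous_sin.continuousOn hv'2cont hv'2c hv'2supp
  have ID2 : IntegrableOn (fun θ => Real.sin θ * ((m : ℝ) ^ 2 / Real.sin θ ^ 2) * ‖v θ‖ ^ 2)
      (Set.Ioo 0 Real.pi) :=
    aux_integrable isOpen_Ioo
      (ContinuousOn.mul Real.continuous_sin.continuousOn
        (ContinuousOn.div continuousOn_const (by fun_prop)
          (fun θ hθ => pow_ne_zero 2 (hsinne θ hθ))))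
      hv2cont hv2c hv2supp
  have IDfull : IntegrableOn
      (fun θ => Real.sin θ * (‖deriv v θ‖ ^ 2 + (m : ℝ) ^ 2 / Real.sin θ ^ 2 * ‖v θ‖ ^ 2))
      (Set.Ioo 0 Real.pi) := by
    apply (ID1.add ID2).congr
    filter_upwards with θ
    simp only [Pi.add_apply]
    ring
  have IB : IntegrableOn (fun θ => Real.sin θ * ‖v θ‖ ^ 2) (Set.Ioo 0 Real.pi) :=
    aux_integrable isOpen_Ioo Real.continuous_sin.continuousOn hv2cont hv2c hv2supp
  -- abbreviations
  set A := ∫ r in Set.Ioi (rPlus M a),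
      (kerrDelta M a r * ‖deriv u r‖ ^ 2 -
        (m : ℝ) ^ 2 * a ^ 2 / kerrDelta M a r * ‖u r‖ ^ 2) with hA
  set B := ∫ θ in Set.Ioo 0 Real.pi, Real.sin θ * ‖v θ‖ ^ 2 with hB
  set C := ∫ r in Set.Ioi (rPlus M a), ‖u r‖ ^ 2 with hC
  set D := ∫ θ in Set.Ioo 0 Real.pi,
      Real.sin θ * (‖deriv v θ‖ ^ 2 + (m : ℝ) ^ 2 / Real.sin θ ^ 2 * ‖v θ‖ ^ 2) with hD
  set G := ∫ r in Set.Ioi (rPlus M a),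
      ((m : ℝ) ^ 2 * a ^ 2 / rPlus M a ^ 4 + 1 / rPlus M a ^ 2) *
        (r ^ 4 / kerrDelta M a r) * ‖u r‖ ^ 2 with hG
  have IA : IntegrableOn
      (fun r => kerrDelta M a r * ‖deriv u r‖ ^ 2 -
        (m : ℝ) ^ 2 * a ^ 2 / kerrDelta M a r * ‖u r‖ ^ 2) (Set.Ioi (rPlus M a)) :=
    IA1.sub IA2
  -- RHS radial integral equals A + G
  have hRr : (∫ r in Set.Ioi (rPlus M a),
        (kerrDelta M a r * ‖deriv u r‖ ^ 2 +
          (((m : ℝ) ^ 2 * a ^ 2 / rPlus M a ^ 4 + 1 / rPlus M a ^ 2) *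
              (r ^ 4 / kerrDelta M a r) -
            (m : ℝ) ^ 2 * a ^ 2 / kerrDelta M a r) * ‖u r‖ ^ 2)) = A + G := by
    rw [hA, hG, ← integral_add IA IG]
    apply integral_congr_ae
    filter_upwards with r
    ring
  -- RHS angular integral equals D + B
  have hRθ : (∫ θ in Set.Ioo 0 Real.pi,
        Real.sin θ *
          (‖deriv v θ‖ ^ 2 + ((m : ℝ) ^ 2 / Real.sin θ ^ 2 + 1) * ‖v θ‖ ^ 2)) = D + B := by
    rw [hD, hB, ← integral_add IDfull IB]
    apply integral_congr_ae
    filter_upwards with θ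
    ring
  rw [hRr, hRθ]
  -- nonnegativity facts
  have hBnn : 0 ≤ B := by
    rw [hB]
    apply setIntegral_nonneg measurableSet_Ioo
    intro θ hθ
    have := Real.sin_pos_of_pos_of_lt_pi hθ.1 hθ.2
    positivity
  have hDnn : 0 ≤ D := by
    rw [hD]
    apply setIntegral_nonneg measurableSet_Ioo
    intro θ hθ
    have := Real.sin_pos_of_pos_of_lt_pi hθ.1 hθ.2
    positivity
  have hGnn : 0 ≤ G := by
    rw [hG]
    apply setIntegral_nonneg measurableSet_Ioi
    intro r hr
    have hΔ := hΔpos r hr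
    have h1 : (0:ℝ) ≤ (m : ℝ) ^ 2 * a ^ 2 / rPlus M a ^ 4 + 1 / rPlus M a ^ 2 := by
      positivity
    exact mul_nonneg (mul_nonneg h1 (div_nonneg (by positivity) hΔ.le)) (by positivity)
  -- pointwise inequality for the key combination
  have hkey : ∀ r ∈ Set.Ioi (rPlus M a),
      (0:ℝ) ≤ (kerrDelta M a r * ‖deriv u r‖ ^ 2 -
        (m : ℝ) ^ 2 * a ^ 2 / kerrDelta M a r * ‖u r‖ ^ 2) +
        ((m : ℝ) ^ 2 * a ^ 2 / rPlus M a ^ 4 + 1 / rPlus M a ^ 2) *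
          (r ^ 4 / kerrDelta M a r) * ‖u r‖ ^ 2 - ‖u r‖ ^ 2 := by
    intro r hr
    have hΔ := hΔpos r hr
    have hrr : rPlus M a < r := hr
    have hm2 : (0:ℝ) ≤ (m : ℝ) ^ 2 := sq_nonneg _
    have hcoef : (0:ℝ) ≤ ((m : ℝ) ^ 2 * a ^ 2 / rPlus M a ^ 4 + 1 / rPlus M a ^ 2) *
        (r ^ 4 / kerrDelta M a r) - (m : ℝ) ^ 2 * a ^ 2 / kerrDelta M a r - 1 := by
      have heq : ((m : ℝ) ^ 2 * a ^ 2 / rPlus M a ^ 4 + 1 / rPlus M a ^ 2) *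
          (r ^ 4 / kerrDelta M a r) - (m : ℝ) ^ 2 * a ^ 2 / kerrDelta M a r - 1 =
          (((m : ℝ) ^ 2 * a ^ 2 / rPlus M a ^ 4 + 1 / rPlus M a ^ 2) * r ^ 4 -
            (m : ℝ) ^ 2 * a ^ 2 - kerrDelta M a r) / kerrDelta M a r := by
        field_simp
      rw [heq]
      apply div_nonneg _ hΔ.le
      have hMrp : M ≤ rPlus M a := M_le_rPlus
      have h4 : rPlus M a ^ 4 ≤ r ^ 4 := pow_le_pow_left₀ hrp.le hrr.le 4
      have h2 : rPlus M a ^ 2 ≤ r ^ 2 := pow_le_pow_left₀ hrp.le hrr.le 2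
      have e1 : (m : ℝ) ^ 2 * a ^ 2 ≤ (m : ℝ) ^ 2 * a ^ 2 / rPlus M a ^ 4 * r ^ 4 := by
        rw [div_mul_eq_mul_div, le_div_iff₀ (by positivity)]
        exact mul_le_mul_of_nonneg_left h4 (by positivity)
      have e2 : r ^ 2 ≤ 1 / rPlus M a ^ 2 * r ^ 4 := by
        rw [one_div, inv_mul_eq_div, le_div_iff₀ (by positivity)]
        nlinarith [sq_nonneg r]
      have e3 : kerrDelta M a r ≤ r ^ 2 := by
        unfold kerrDelta
        nlinarith
      have edist : ((m : ℝ) ^ 2 * a ^ 2 / rPlus M a ^ 4 + 1 / rPlus M a ^ 2) * r ^ 4 =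
          (m : ℝ) ^ 2 * a ^ 2 / rPlus M a ^ 4 * r ^ 4 + 1 / rPlus M a ^ 2 * r ^ 4 := by
        ring
      rw [edist]
      linarith
    have hrw : (kerrDelta M a r * ‖deriv u r‖ ^ 2 -
        (m : ℝ) ^ 2 * a ^ 2 / kerrDelta M a r * ‖u r‖ ^ 2) +
        ((m : ℝ) ^ 2 * a ^ 2 / rPlus M a ^ 4 + 1 / rPlus M a ^ 2) *
          (r ^ 4 / kerrDelta M a r) * ‖u r‖ ^ 2 - ‖u r‖ ^ 2 =
        kerrDelta M a r * ‖deriv u r‖ ^ 2 +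
        (((m : ℝ) ^ 2 * a ^ 2 / rPlus M a ^ 4 + 1 / rPlus M a ^ 2) *
          (r ^ 4 / kerrDelta M a r) - (m : ℝ) ^ 2 * a ^ 2 / kerrDelta M a r - 1) *
          ‖u r‖ ^ 2 := by ring
    rw [hrw]
    exact add_nonneg (mul_nonneg hΔ.le (sq_nonneg _)) (mul_nonneg hcoef (sq_nonneg _))
  -- the key integral inequality : 0 ≤ A + G - C
  have hS : 0 ≤ A + G - C := by
    have heq : A + G - C = ∫ r in Set.Ioi (rPlus M a),
        ((kerrDelta M a r * ‖deriv u r‖ ^ 2 -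
          (m : ℝ) ^ 2 * a ^ 2 / kerrDelta M a r * ‖u r‖ ^ 2) +
          ((m : ℝ) ^ 2 * a ^ 2 / rPlus M a ^ 4 + 1 / rPlus M a ^ 2) *
            (r ^ 4 / kerrDelta M a r) * ‖u r‖ ^ 2 - ‖u r‖ ^ 2) := by
      rw [hA, hG, hC, ← integral_add IA IG]
      exact (integral_sub (IA.add IG) IC).symm
    rw [heq]
    exact setIntegral_nonneg measurableSet_Ioi hkey
  nlinarith [mul_nonneg hS hDnn, mul_nonneg hGnn hBnn]
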